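/- In the setup below, let ξ, η ∈ C_c(G), let K₁, K₂ ⊆ G be compact sets such that ξ(g⁻¹h)·η(h) = 0 whenever (g,h) ∉ K₁ × K₂, and let D > 0 satisfy d(g,h) + d(e,h) + Δ(g)^{−1/2} ≤ D for all (g,h) ∈ K₁ × K₂. Let T be a bounded operator on ℓ²(Z) of finite propagation, and let N > 0 and ε₀ > 0 be such that |T_{z,w}| ≤ ε₀ for all z,w ∈ Z with d(e,z) > N and d(e,w) > N. Then for every x ∈ G with d(e,x) > N + D + δ/4, |∫_G ∫_G ξ(g⁻¹h) · conj(η(h)) · T̂_g(xh⁻¹) dμ(g) dμ(h)| ≤ ε₀ · D · ‖ξ‖_∞ · ‖η‖_∞ · μ(K₁) · μ(K₂) · ‖φ‖_∞². -/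

import Mathlib

/-!
The support of `φ` has radius `δ / 4` and `Z` is `δ`-separated, so at every point at most one
`φ_z` is nonzero and `T̂_g(u)` is a single term `φ_z(u) φ_w(ug) T_{z,w} Δ(g)^{-1/2}` with `z`
within `δ / 4` of `u` and `w` within `δ / 4` of `ug`. For `u = xh⁻¹` and `(g, h) ∈ K₁ × K₂` both
`u` and `ug` lie within `D` of `x`, so `z` and `w` are farther than `N` from `e` and
`|T_{z,w}| ≤ ε₀`. With `Δ(g)^{-1/2} ≤ D` this bounds the integrand by `ε₀ D ‖ξ‖ ‖η‖ ‖φ‖²` on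
`K₁ × K₂`, and it vanishes elsewhere.
-/

open MeasureTheory Metric Bornology Filter Topology
open scoped ENNReal BoundedContinuousFunction

noncomputable section

/-- `ℓ²(X)` over `ℂ`. -/
abbrev l2 (X : Type*) : Type _ := lp (fun _ : X => ℂ) 2

/-- The standard basis vector `δ_x` of `ℓ²(X)`. -/
def delta {X : Type*} (x : X) : l2 X := by classical exact lp.single 2 x 1

/-- The matrix entry `a_{x,y} = ⟨a δ_y, δ_x⟩` of a bounded operator on `ℓ²(X)`. -/
def entry {X : Type*} (a : l2 X →L[ℂ] l2 X) (x y : X) : ℂ := inner ℂ (delta x) (a (delta y))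

/-- `d` is a proper left-invariant metric on the topological group `G` that induces
(is compatible with) its topology. -/
structure IsProperLeftInvariantCompatibleMetric (G : Type*) [Group G] [TopologicalSpace G]
    (d : G → G → ℝ) : Prop where
  refl : ∀ x, d x x = 0
  eq_of : ∀ {x y}, d x y = 0 → x = y
  symm : ∀ x y, d x y = d y x
  triangle : ∀ x y z, d x z ≤ d x y + d y z
  left_invariant : ∀ g x y, d (g * x) (g * y) = d x y
  compatible : ∀ s : Set G, IsOpen s ↔ ∀ x ∈ s, ∃ ε > 0, ∀ y, d x y < ε → y ∈ s
  proper : ∀ (x : G) (r : ℝ), IsCompact {y : G | d x y ≤ r}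

/-- The kernel `T̂` associated to a finite propagation operator `T` on `ℓ²(Z)`:
`T̂_y(x) = ∑_{z,w ∈ Z} φ_z(x) φ_w(xy) T_{z,w} Δ(y)^{-1/2}`, where `φ_z(g) = φ(z⁻¹g)`. -/
def hatT {G : Type*} [Group G] (Δ : G → ℝ) (φ : G → ℝ) (Z : Set G)
    (T : l2 Z →L[ℂ] l2 Z) (y x : G) : ℂ :=
  ∑' (z : Z) (w : Z),
    ((φ ((z : G)⁻¹ * x) : ℝ) : ℂ) * ((φ ((w : G)⁻¹ * (x * y)) : ℝ) : ℂ) * entry T z w *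
      (((Δ y ^ (-(1/2) : ℝ) : ℝ)) : ℂ)

theorem norm_tsum_tsum_le_of_subsingleton {ι κ E : Type*} [NormedAddCommGroup E]
    {f : ι → κ → E} {C : ℝ} (hC : 0 ≤ C)
    (hf : ∀ i j i' j', f i j ≠ 0 → f i' j' ≠ 0 → i = i' ∧ j = j')
    (hbound : ∀ i j, f i j ≠ 0 → ‖f i j‖ ≤ C) :
    ‖∑' i, ∑' j, f i j‖ ≤ C := by
  by_cases h : ∃ i j, f i j ≠ 0
  · obtain ⟨i₀, j₀, h₀⟩ := h
    have hzero : ∀ i j, (i, j) ≠ (i₀, j₀) → f i j = 0 := fun i j hne ↦ by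
      by_contra hij
      exact hne (Prod.ext_iff.mpr (hf _ _ _ _ hij h₀))
    rw [tsum_eq_single i₀ fun i hi ↦ (tsum_congr fun j ↦ hzero i j (by simp [hi])).trans
      tsum_zero, tsum_eq_single j₀ fun j hj ↦ hzero i₀ j (by simp [hj])]
    exact hbound i₀ j₀ h₀
  · push Not at h
    simpa [h] using hC

theorem norm_integral_integral_le_of_forall_mem_prod {α β E : Type*} [MeasurableSpace α]
    [MeasurableSpace β] [NormedAddCommGroup E] [NormedSpace ℝ E] {μ : Measure α} {ν : Measure β}
    {s : Set α} {t : Set β} (hs : μ s < ⊤) (ht : ν t < ⊤) {F : α → β → E} {C : ℝ}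
    (hF : ∀ a b, (a, b) ∉ s ×ˢ t → F a b = 0) (hC : ∀ a ∈ s, ∀ b ∈ t, ‖F a b‖ ≤ C) :
    ‖∫ b, ∫ a, F a b ∂μ ∂ν‖ ≤ C * μ.real s * ν.real t := by
  have houter : ∀ b, b ∉ t → ∫ a, F a b ∂μ = 0 := fun b hb ↦ by
    simp [hF _ b (by simp [hb])]
  rw [← setIntegral_eq_integral_of_forall_compl_eq_zero houter]
  refine norm_setIntegral_le_of_norm_le_const ht fun b hb ↦ ?_
  rw [← setIntegral_eq_integral_of_forall_compl_eq_zero fun a (ha : a ∉ s) ↦ hF a b (by simp [ha])]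
  exact norm_setIntegral_le_of_norm_le_const hs fun a ha ↦ hC a ha b hb

namespace IsProperLeftInvariantCompatibleMetric

variable {G : Type*} [Group G] [TopologicalSpace G] {d : G → G → ℝ}

theorem nonneg (hd : IsProperLeftInvariantCompatibleMetric G d) (a b : G) : 0 ≤ d a b := by
  linarith [hd.triangle a b a, hd.refl a, hd.symm b a]

theorem apply_eq_apply_one_inv_mul (hd : IsProperLeftInvariantCompatibleMetric G d) (a b : G) :
    d a b = d 1 (a⁻¹ * b) := by
  simpa using (hd.left_invariant a⁻¹ a b).symm

theorem apply_one_inv (hd : IsProperLeftInvariantCompatibleMetric G d) (a : G) :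
    d 1 a⁻¹ = d 1 a := by
  rw [← mul_one a⁻¹, ← hd.apply_eq_apply_one_inv_mul, hd.symm]

theorem lt_apply_one_of_le (hd : IsProperLeftInvariantCompatibleMetric G d) {x v z : G}
    {N s r : ℝ} (hx : N + s + r < d 1 x) (hv : d x v ≤ s) (hz : d z v ≤ r) : N < d 1 z := by
  linarith [hd.triangle 1 z x, hd.triangle z v x, hd.symm v x]

variable {r : ℝ} {φ : G → ℝ}

theorem apply_le_of_ne_zero (hd : IsProperLeftInvariantCompatibleMetric G d)
    (hφsupp : ∀ g, r < d 1 g → φ g = 0) {z u : G} (hz : φ (z⁻¹ * u) ≠ 0) : d z u ≤ r := by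
  by_contra! hlt
  exact hz (hφsupp _ (hd.apply_eq_apply_one_inv_mul z u ▸ hlt))

theorem eq_of_ne_zero_of_ne_zero (hd : IsProperLeftInvariantCompatibleMetric G d)
    {Z : Set G} {δ : ℝ} (hr : 2 * r < δ) (hsep : ∀ z ∈ Z, ∀ w ∈ Z, z ≠ w → δ ≤ d z w)
    (hφsupp : ∀ g, r < d 1 g → φ g = 0) {u : G} {z w : Z}
    (hz : φ ((z : G)⁻¹ * u) ≠ 0) (hw : φ ((w : G)⁻¹ * u) ≠ 0) : z = w := by
  by_contra hne
  have := hsep z z.2 w w.2 (Subtype.coe_ne_coe.mpr hne)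
  linarith [hd.apply_le_of_ne_zero hφsupp hz, hd.apply_le_of_ne_zero hφsupp hw,
    hd.triangle z u w, hd.symm u w]

theorem norm_hatT_le (hd : IsProperLeftInvariantCompatibleMetric G d) {Z : Set G} {δ : ℝ}
    (hr : 2 * r < δ) (hsep : ∀ z ∈ Z, ∀ w ∈ Z, z ≠ w → δ ≤ d z w) (hφnn : ∀ g, 0 ≤ φ g)
    (hφsupp : ∀ g, r < d 1 g → φ g = 0) {Cφ : ℝ} (hCφ : ∀ g, φ g ≤ Cφ) {Δ : G → ℝ}
    {T : l2 Z →L[ℂ] l2 Z} {ε : ℝ} (hε : 0 ≤ ε) {u y : G} (hΔ : 0 ≤ Δ y)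
    (hT : ∀ z w : Z, d z u ≤ r → d w (u * y) ≤ r → ‖entry T z w‖ ≤ ε) :
    ‖hatT Δ φ Z T y u‖ ≤ ε * Cφ ^ 2 * Δ y ^ (-(1/2) : ℝ) := by
  have hΔ' : 0 ≤ Δ y ^ (-(1/2) : ℝ) := Real.rpow_nonneg hΔ _
  have hCφ0 : 0 ≤ Cφ := (hφnn 1).trans (hCφ 1)
  have hsupp : ∀ z w : Z, ((φ ((z : G)⁻¹ * u) : ℝ) : ℂ) * ((φ ((w : G)⁻¹ * (u * y)) : ℝ) : ℂ) *
      entry T z w * ((Δ y ^ (-(1/2) : ℝ) : ℝ) : ℂ) ≠ 0 →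
      φ ((z : G)⁻¹ * u) ≠ 0 ∧ φ ((w : G)⁻¹ * (u * y)) ≠ 0 := fun z w h ↦ by
    simp only [ne_eq, mul_eq_zero, Complex.ofReal_eq_zero, not_or] at h
    exact ⟨h.1.1.1, h.1.1.2⟩
  refine norm_tsum_tsum_le_of_subsingleton (by positivity) (fun z w z' w' h h' ↦ ?_)
    fun z w h ↦ ?_
  · exact ⟨hd.eq_of_ne_zero_of_ne_zero hr hsep hφsupp (hsupp z w h).1 (hsupp z' w' h').1,
      hd.eq_of_ne_zero_of_ne_zero hr hsep hφsupp (hsupp z w h).2 (hsupp z' w' h').2⟩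
  · obtain ⟨hz, hw⟩ := hsupp z w h
    have hTzw := hT z w (hd.apply_le_of_ne_zero hφsupp hz) (hd.apply_le_of_ne_zero hφsupp hw)
    simp only [norm_mul, Complex.norm_real, Real.norm_of_nonneg (hφnn _), Real.norm_of_nonneg hΔ']
    calc φ ((z : G)⁻¹ * u) * φ ((w : G)⁻¹ * (u * y)) * ‖entry T z w‖ * Δ y ^ (-(1/2) : ℝ)
        ≤ Cφ * Cφ * ε * Δ y ^ (-(1/2) : ℝ) := by
          gcongr
          exacts [hφnn _, hCφ _, hCφ _]
      _ = ε * Cφ ^ 2 * Δ y ^ (-(1/2) : ℝ) := by ring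

theorem norm_hatT_mul_inv_le (hd : IsProperLeftInvariantCompatibleMetric G d) {Z : Set G}
    {δ : ℝ} (hr : 2 * r < δ) (hsep : ∀ z ∈ Z, ∀ w ∈ Z, z ≠ w → δ ≤ d z w) (hφnn : ∀ g, 0 ≤ φ g)
    (hφsupp : ∀ g, r < d 1 g → φ g = 0) {Cφ : ℝ} (hCφ : ∀ g, φ g ≤ Cφ) {Δ : G → ℝ}
    {T : l2 Z →L[ℂ] l2 Z} {N ε D : ℝ} (hε : 0 ≤ ε)
    (hT : ∀ z w : Z, N < d 1 z → N < d 1 w → ‖entry T z w‖ ≤ ε) {x g h : G}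
    (hx : N + D + r < d 1 x) (hΔ : 0 ≤ Δ g) (hD : d g h + d 1 h + Δ g ^ (-(1/2) : ℝ) ≤ D) :
    ‖hatT Δ φ Z T g (x * h⁻¹)‖ ≤ ε * Cφ ^ 2 * D := by
  have hgh := hd.nonneg g h
  have h1h := hd.nonneg 1 h
  have hΔg := Real.rpow_nonneg hΔ (-(1/2) : ℝ)
  have hxu : d x (x * h⁻¹) = d 1 h := by
    rw [hd.apply_eq_apply_one_inv_mul, inv_mul_cancel_left, hd.apply_one_inv]
  have hxug : d x (x * h⁻¹ * g) = d g h := by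
    rw [hd.apply_eq_apply_one_inv_mul, mul_assoc, inv_mul_cancel_left,
      ← hd.apply_eq_apply_one_inv_mul, hd.symm]
  have hTnear : ∀ z w : Z, d z (x * h⁻¹) ≤ r → d w (x * h⁻¹ * g) ≤ r → ‖entry T z w‖ ≤ ε :=
    fun z w hz hw ↦ hT z w (hd.lt_apply_one_of_le hx (by linarith) hz)
      (hd.lt_apply_one_of_le hx (by linarith) hw)
  calc ‖hatT Δ φ Z T g (x * h⁻¹)‖ ≤ ε * Cφ ^ 2 * Δ g ^ (-(1/2) : ℝ) :=
        hd.norm_hatT_le hr hsep hφnn hφsupp hCφ hε hΔ hTnear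
    _ ≤ ε * Cφ ^ 2 * D := by gcongr; linarith

end IsProperLeftInvariantCompatibleMetric

theorem slice_map_estimate_general
    (G : Type*) [Group G] [TopologicalSpace G] [MeasurableSpace G]
    (μ : Measure G) [μ.IsHaarMeasure]
    (Δ : G → ℝ) (hΔpos : ∀ y : G, 0 < Δ y)
    (d : G → G → ℝ) (hd : IsProperLeftInvariantCompatibleMetric G d)
    (Z : Set G)
    (δ : ℝ) (hδpos : 0 < δ)
    (hsep : ∀ z ∈ Z, ∀ w ∈ Z, z ≠ w → δ ≤ d z w)
    (φ : G → ℝ) (hφnn : ∀ g : G, 0 ≤ φ g)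
    (hφsupp : ∀ g : G, δ / 4 < d 1 g → φ g = 0)
    (ξ η : G → ℂ)
    (K₁ K₂ : Set G) (hK₁ : IsCompact K₁) (hK₂ : IsCompact K₂)
    (hKsupp : ∀ g h : G, (g, h) ∉ K₁ ×ˢ K₂ → ξ (g⁻¹ * h) * η h = 0)
    (D : ℝ) (hDbound : ∀ g ∈ K₁, ∀ h ∈ K₂, d g h + d 1 h + Δ g ^ (-(1/2) : ℝ) ≤ D)
    (T : l2 Z →L[ℂ] l2 Z) (N : ℝ) (ε₀ : ℝ) (hε₀ : 0 < ε₀)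
    (hTsmall : ∀ z w : Z, N < d 1 z → N < d 1 w → ‖entry T z w‖ ≤ ε₀)
    (Cξ Cη Cφ : ℝ) (hCξ : ∀ g : G, ‖ξ g‖ ≤ Cξ) (hCη : ∀ g : G, ‖η g‖ ≤ Cη)
    (hCφ : ∀ g : G, φ g ≤ Cφ) :
    ∀ x : G, N + D + δ / 4 < d 1 x →
      ‖∫ h, ∫ g, ξ (g⁻¹ * h) * (starRingEnd ℂ) (η h) * hatT Δ φ Z T g (x * h⁻¹) ∂μ ∂μ‖ ≤
        ε₀ * D * Cξ * Cη * (μ K₁).toReal * (μ K₂).toReal * Cφ ^ 2 := by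
  intro x hx
  have hCξ0 : 0 ≤ Cξ := (norm_nonneg _).trans (hCξ 1)
  have hCη0 : 0 ≤ Cη := (norm_nonneg _).trans (hCη 1)
  have hvanish : ∀ g h, (g, h) ∉ K₁ ×ˢ K₂ →
      ξ (g⁻¹ * h) * (starRingEnd ℂ) (η h) * hatT Δ φ Z T g (x * h⁻¹) = 0 := fun g h hgh ↦ by
    rcases mul_eq_zero.mp (hKsupp g h hgh) with h0 | h0 <;> simp [h0]
  have hbound : ∀ g ∈ K₁, ∀ h ∈ K₂,
      ‖ξ (g⁻¹ * h) * (starRingEnd ℂ) (η h) * hatT Δ φ Z T g (x * h⁻¹)‖ ≤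
        Cξ * Cη * (ε₀ * Cφ ^ 2 * D) := fun g hg h hh ↦ by
    rw [norm_mul, norm_mul, RCLike.norm_conj]
    exact mul_le_mul (mul_le_mul (hCξ _) (hCη _) (norm_nonneg _) hCξ0)
      (hd.norm_hatT_mul_inv_le (by linarith) hsep hφnn hφsupp hCφ hε₀.le hTsmall hx (hΔpos g).le
        (hDbound g hg h hh)) (norm_nonneg _) (mul_nonneg hCξ0 hCη0)
  calc _ ≤ Cξ * Cη * (ε₀ * Cφ ^ 2 * D) * μ.real K₁ * μ.real K₂ :=
        norm_integral_integral_le_of_forall_mem_prod hK₁.measure_lt_top hK₂.measure_lt_top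
          hvanish hbound
    _ = _ := by rw [measureReal_def, measureReal_def]; ring

/-- The key slice-map estimate: far from the identity, the slice of
`Φ(T)` against compactly supported `ξ, η` is bounded by
`ε₀ · D · ‖ξ‖_∞ · ‖η‖_∞ · μ(K₁) · μ(K₂) · ‖φ‖_∞²`. -/
theorem slice_map_estimate
    (G : Type*) [Group G] [TopologicalSpace G] [IsTopologicalGroup G]
    [LocallyCompactSpace G] [SecondCountableTopology G] [T2Space G]
    [MeasurableSpace G] [BorelSpace G]
    (μ : Measure G) [μ.IsHaarMeasure]
    (Δ : G → ℝ) (hΔpos : ∀ y : G, 0 < Δ y)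
    (hΔ : ∀ y : G, Measure.map (fun x => x * y) μ = ENNReal.ofReal (Δ y)⁻¹ • μ)
    (d : G → G → ℝ) (hd : IsProperLeftInvariantCompatibleMetric G d)
    (Z : Set G)
    (hZulf : ∀ S > (0:ℝ), ∃ N : ℕ, ∀ z ∈ Z,
      {x ∈ Z | d z x ≤ S}.Finite ∧ {x ∈ Z | d z x ≤ S}.ncard ≤ N)
    (δ : ℝ) (hδpos : 0 < δ)
    (hsep : ∀ z ∈ Z, ∀ w ∈ Z, z ≠ w → δ ≤ d z w)
    (hlat : ∃ R > (0:ℝ), ∀ x : G, ∃ z ∈ Z, d z x ≤ R)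
    (φ : G → ℝ) (hφcont : Continuous φ) (hφnn : ∀ g : G, 0 ≤ φ g)
    (hφsupp : ∀ g : G, δ / 4 < d 1 g → φ g = 0)
    (hφnorm : ∫ g, φ g ^ 2 ∂μ = 1)
    (ξ η : G → ℂ) (hξcont : Continuous ξ) (hξsupp : HasCompactSupport ξ)
    (hηcont : Continuous η) (hηsupp : HasCompactSupport η)
    (K₁ K₂ : Set G) (hK₁ : IsCompact K₁) (hK₂ : IsCompact K₂)
    (hKsupp : ∀ g h : G, (g, h) ∉ K₁ ×ˢ K₂ → ξ (g⁻¹ * h) * η h = 0)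
    (D : ℝ) (hD : 0 < D)
    (hDbound : ∀ g ∈ K₁, ∀ h ∈ K₂, d g h + d 1 h + Δ g ^ (-(1/2) : ℝ) ≤ D)
    (T : l2 Z →L[ℂ] l2 Z) (P : ℝ) (hP : 0 ≤ P)
    (hT : ∀ z w : Z, P < d z w → entry T z w = 0)
    (N : ℝ) (hN : 0 < N) (ε₀ : ℝ) (hε₀ : 0 < ε₀)
    (hTsmall : ∀ z w : Z, N < d 1 z → N < d 1 w → ‖entry T z w‖ ≤ ε₀)
    (Cξ Cη Cφ : ℝ) (hCξ : ∀ g : G, ‖ξ g‖ ≤ Cξ) (hCη : ∀ g : G, ‖η g‖ ≤ Cη)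
    (hCφ : ∀ g : G, φ g ≤ Cφ) :
    ∀ x : G, N + D + δ / 4 < d 1 x →
      ‖∫ h, ∫ g, ξ (g⁻¹ * h) * (starRingEnd ℂ) (η h) * hatT Δ φ Z T g (x * h⁻¹) ∂μ ∂μ‖ ≤
        ε₀ * D * Cξ * Cη * (μ K₁).toReal * (μ K₂).toReal * Cφ ^ 2 :=
  slice_map_estimate_general G μ Δ hΔpos d hd Z δ hδpos hsep φ hφnn hφsupp ξ η K₁ K₂ hK₁ hK₂ hKsupp
    D hDbound T N ε₀ hε₀ hTsmall Cξ Cη Cφ hCξ hCη hCφ
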